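/- arXiv:1612.09169 — 3 statements merged into one kernel-verified Lean document; each statement's English description precedes it below -/
import Mathlib

section
/- Let X_0, X_1, ..., X_{n-1} be i.i.d. random variables with common probability mass function p on a countable set X, and let φ: X → ℝ. Define the additive weight function φ_n(x_0,...,x_{n-1}) = Σ_{j=0}^{n-1} φ(x_j) and the joint pmf f_n(x_0,...,x_{n-1}) = Π p(x_i). Then the weighted entropy H^w_{φ_n}(f_n) := E[-φ_n(X_0,...,X_{n-1}) log f_n(X_0,...,X_{n-1})] equals n(n-1)·H(p)·E[φ(X_0)] + n·H^w_φ(p), where H(p) = -E[log p(X_0)] and H^w_φ(p) = -E[φ(X_0) log p(X_0)]. -/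
open Real Filter

private lemma logmul_aux (u v : ℝ) :
    (u * v) * Real.log (u * v) = v * (u * Real.log u) + u * (v * Real.log v) := by
  rcases eq_or_ne u 0 with h | h
  · simp [h]
  rcases eq_or_ne v 0 with h' | h'
  · simp [h']
  rw [Real.log_mul h h']; ring

private lemma base_aux {X : Type*} (F : (Fin 0 → X) → ℝ) :
    Summable F ∧ ∑' y, F y = F (fun i => i.elim0) := by
  have h : HasSum F (F (fun i => i.elim0)) :=
    hasSum_single _ (fun b hb => absurd (funext fun i => i.elim0) hb)
  exact ⟨h.summable, h.tsum_eq⟩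

private lemma step_aux {X : Type*} {n : ℕ} {f : X → ℝ} {g : (Fin n → X) → ℝ}
    (hf : Summable f) (hg : Summable g) :
    Summable (fun x : Fin (n + 1) → X => f (x 0) * g (fun i => x i.succ)) ∧
      ∑' x : Fin (n + 1) → X, f (x 0) * g (fun i => x i.succ)
        = (∑' a, f a) * (∑' y, g y) := by
  have hf' : Summable fun a => ‖f a‖ := by simpa [Real.norm_eq_abs] using hf.abs
  have hg' : Summable fun y => ‖g y‖ := by simpa [Real.norm_eq_abs] using hg.abs
  have hfg : Summable (fun z : X × (Fin n → X) => f z.1 * g z.2) :=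
    summable_mul_of_summable_norm hf' hg'
  let e : (X × (Fin n → X)) ≃ (Fin (n + 1) → X) := Fin.consEquiv fun _ => X
  have hcomp : ∀ z : X × (Fin n → X),
      f ((e z) 0) * g (fun i => (e z) i.succ) = f z.1 * g z.2 := by
    intro z
    simp [e, Fin.consEquiv]
  constructor
  · refine e.summable_iff.mp ?_
    exact (summable_congr hcomp).mpr hfg
  · rw [← e.tsum_eq (fun x : Fin (n + 1) → X => f (x 0) * g (fun i => x i.succ))]
    exact (tsum_congr hcomp).trans (tsum_mul_tsum_of_summable_norm hf' hg').symm

section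

variable {X : Type*} {p φ : X → ℝ}

private lemma P1_aux (hp : Summable p) (hp1 : ∑' x, p x = 1) (n : ℕ) :
    Summable (fun y : Fin n → X => ∏ i, p (y i)) ∧
      ∑' y : Fin n → X, ∏ i, p (y i) = 1 := by
  induction n with
  | zero => simpa using base_aux (fun y : Fin 0 → X => ∏ i, p (y i))
  | succ n ih =>
    have hpt : ∀ y : Fin (n + 1) → X,
        ∏ i, p (y i) = p (y 0) * ∏ i : Fin n, p (y i.succ) := fun y =>
      Fin.prod_univ_succ _
    have h := step_aux (g := fun y : Fin n → X => ∏ i, p (y i)) hp ih.1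
    constructor
    · exact (summable_congr hpt).mpr h.1
    · rw [tsum_congr hpt, h.2, hp1, ih.2, one_mul]

private lemma P2_aux (hp : Summable p) (hp1 : ∑' x, p x = 1)
    (hH : Summable (fun x => p x * Real.log (p x))) (n : ℕ) :
    Summable (fun y : Fin n → X => (∏ i, p (y i)) * Real.log (∏ i, p (y i))) ∧
      ∑' y : Fin n → X, (∏ i, p (y i)) * Real.log (∏ i, p (y i))
        = n * ∑' x, p x * Real.log (p x) := by
  induction n with
  | zero =>
    simpa using base_aux
      (fun y : Fin 0 → X => (∏ i, p (y i)) * Real.log (∏ i, p (y i)))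
  | succ n ih =>
    have h1 := step_aux (g := fun y : Fin n → X => ∏ i, p (y i)) hH (P1_aux hp hp1 n).1
    have h2 := step_aux
      (g := fun y : Fin n → X => (∏ i, p (y i)) * Real.log (∏ i, p (y i))) hp ih.1
    have hpt : ∀ y : Fin (n + 1) → X,
        (∏ i, p (y i)) * Real.log (∏ i, p (y i))
          = (p (y 0) * Real.log (p (y 0))) * (∏ i : Fin n, p (y i.succ))
            + p (y 0) * ((∏ i : Fin n, p (y i.succ))
                * Real.log (∏ i : Fin n, p (y i.succ))) := by
      intro y
      rw [Fin.prod_univ_succ, logmul_aux]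
      ring
    constructor
    · exact (summable_congr hpt).mpr (h1.1.add h2.1)
    · rw [tsum_congr hpt, Summable.tsum_add h1.1 h2.1, h1.2, h2.2, (P1_aux hp hp1 n).2, hp1, ih.2]
      push_cast
      ring

private lemma P3_aux (hp : Summable p) (hp1 : ∑' x, p x = 1)
    (hE : Summable (fun x => φ x * p x)) (n : ℕ) :
    Summable (fun y : Fin n → X => (∑ j, φ (y j)) * ∏ i, p (y i)) ∧
      ∑' y : Fin n → X, (∑ j, φ (y j)) * ∏ i, p (y i) = n * ∑' x, φ x * p x := by
  induction n with
  | zero =>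
    simpa using base_aux (fun y : Fin 0 → X => (∑ j, φ (y j)) * ∏ i, p (y i))
  | succ n ih =>
    have h1 := step_aux (f := fun x => φ x * p x)
      (g := fun y : Fin n → X => ∏ i, p (y i)) hE (P1_aux hp hp1 n).1
    have h2 := step_aux
      (g := fun y : Fin n → X => (∑ j, φ (y j)) * ∏ i, p (y i)) hp ih.1
    have hpt : ∀ y : Fin (n + 1) → X,
        (∑ j, φ (y j)) * ∏ i, p (y i)
          = (φ (y 0) * p (y 0)) * (∏ i : Fin n, p (y i.succ))
            + p (y 0) * ((∑ j : Fin n, φ (y j.succ)) * ∏ i : Fin n, p (y i.succ)) := by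
      intro y
      rw [Fin.prod_univ_succ, Fin.sum_univ_succ]
      ring
    constructor
    · exact (summable_congr hpt).mpr (h1.1.add h2.1)
    · rw [tsum_congr hpt, Summable.tsum_add h1.1 h2.1, h1.2, h2.2, (P1_aux hp hp1 n).2, hp1, ih.2]
      push_cast
      ring

private lemma P4_aux (hp : Summable p) (hp1 : ∑' x, p x = 1)
    (hH : Summable (fun x => p x * Real.log (p x)))
    (hE : Summable (fun x => φ x * p x))
    (hW : Summable (fun x => φ x * p x * Real.log (p x))) (n : ℕ) :
    Summable (fun y : Fin n → X =>
        (∑ j, φ (y j)) * (∏ i, p (y i)) * Real.log (∏ i, p (y i))) ∧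
      ∑' y : Fin n → X, (∑ j, φ (y j)) * (∏ i, p (y i)) * Real.log (∏ i, p (y i))
        = (n : ℝ) * ((n : ℝ) - 1) * (∑' x, p x * Real.log (p x)) * (∑' x, φ x * p x)
          + (n : ℝ) * ∑' x, φ x * p x * Real.log (p x) := by
  induction n with
  | zero =>
    simpa using base_aux (fun y : Fin 0 → X =>
      (∑ j, φ (y j)) * (∏ i, p (y i)) * Real.log (∏ i, p (y i)))
  | succ n ih =>
    have h1 := step_aux (f := fun x => φ x * p x * Real.log (p x))
      (g := fun y : Fin n → X => ∏ i, p (y i)) hW (P1_aux hp hp1 n).1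
    have h2 := step_aux (f := fun x => p x * Real.log (p x))
      (g := fun y : Fin n → X => (∑ j, φ (y j)) * ∏ i, p (y i)) hH
      (P3_aux hp hp1 hE n).1
    have h3 := step_aux (f := fun x => φ x * p x)
      (g := fun y : Fin n → X => (∏ i, p (y i)) * Real.log (∏ i, p (y i))) hE
      (P2_aux hp hp1 hH n).1
    have h4 := step_aux
      (g := fun y : Fin n → X =>
        (∑ j, φ (y j)) * (∏ i, p (y i)) * Real.log (∏ i, p (y i))) hp ih.1
    have hpt : ∀ y : Fin (n + 1) → X,
        (∑ j, φ (y j)) * (∏ i, p (y i)) * Real.log (∏ i, p (y i))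
          = ((φ (y 0) * p (y 0) * Real.log (p (y 0))) * (∏ i : Fin n, p (y i.succ))
              + (p (y 0) * Real.log (p (y 0)))
                  * ((∑ j : Fin n, φ (y j.succ)) * ∏ i : Fin n, p (y i.succ)))
            + ((φ (y 0) * p (y 0)) * ((∏ i : Fin n, p (y i.succ))
                  * Real.log (∏ i : Fin n, p (y i.succ)))
              + p (y 0) * ((∑ j : Fin n, φ (y j.succ)) * (∏ i : Fin n, p (y i.succ))
                  * Real.log (∏ i : Fin n, p (y i.succ)))) := by
      intro y
      rw [Fin.prod_univ_succ, Fin.sum_univ_succ, mul_assoc, logmul_aux]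
      ring
    constructor
    · exact (summable_congr hpt).mpr ((h1.1.add h2.1).add (h3.1.add h4.1))
    · rw [tsum_congr hpt, Summable.tsum_add (h1.1.add h2.1) (h3.1.add h4.1),
        Summable.tsum_add h1.1 h2.1, Summable.tsum_add h3.1 h4.1, h1.2, h2.2, h3.2, h4.2,
        (P1_aux hp hp1 n).2, (P2_aux hp hp1 hH n).2, (P3_aux hp hp1 hE n).2, hp1, ih.2]
      push_cast
      ring

end

/-- Weighted entropy of an i.i.d. string with an additive weight function:
`H^w_{φ_n}(f_n) = n(n-1) H(p) E[φ] + n H^w_φ(p)`. -/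
theorem weighted_entropy_iid_additive {X : Type*} [Countable X]
    (p : X → ℝ) (φ : X → ℝ) (n : ℕ)
    (hp0 : ∀ x, 0 ≤ p x) (hp1 : ∑' x, p x = 1)
    (hH : Summable (fun x => p x * Real.log (p x)))
    (hE : Summable (fun x => φ x * p x))
    (hW : Summable (fun x => φ x * p x * Real.log (p x)))
    (hsum : Summable (fun x : Fin n → X =>
      (∑ j, φ (x j)) * (∏ i, p (x i)) * Real.log (∏ i, p (x i)))) :
    -∑' x : Fin n → X,
        (∑ j, φ (x j)) * (∏ i, p (x i)) * Real.log (∏ i, p (x i))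
      = (n : ℝ) * ((n : ℝ) - 1) * (-∑' x, p x * Real.log (p x)) * (∑' x, φ x * p x)
        + (n : ℝ) * (-∑' x, φ x * p x * Real.log (p x)) := by
  have hp : Summable p := by
    by_contra h
    rw [tsum_eq_zero_of_not_summable h] at hp1
    norm_num at hp1
  rw [(P4_aux hp hp1 hH hE hW n).2]
  ring
end

section
/- Let X_0, X_1, ..., X_{n-1} be i.i.d. random variables with common pmf p on a countable set X, and let φ: X → [0,∞). Define the multiplicative weight function φ_n(x_0,...,x_{n-1}) = Π_{j=0}^{n-1} φ(x_j). Then the weighted entropy H^w_{φ_n}(f_n) = E[-φ_n(X) log f_n(X)] equals n · H^w_φ(p) · (E[φ(X_0)])^{n-1}, where H^w_φ(p) = -E[φ(X_0) log p(X_0)] and f_n is the product pmf. -/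
/-!
Expanding `log (∏ p(xᵢ)) = ∑ log p(xᵢ)` writes the weighted information of a string as a sum
of `n` product functions, the `i`-th having the factor `φ p log p` in coordinate `i` and `φ p`
in the others. By Fubini for absolutely summable products, the `i`-th one sums to
`(∑ φ p log p) (∑ φ p)^(n-1)`.
-/

open Real Finset

section FinPiProd

variable {R ι : Type*} [NormedCommRing R]

theorem summable_norm_fin_pi_prod {n : ℕ} {g : Fin n → ι → R}
    (hg : ∀ j, Summable fun y => ‖g j y‖) :
    Summable fun x : Fin n → ι => ‖∏ j, g j (x j)‖ := by
  induction n with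
  | zero => exact .of_finite
  | succ n ih =>
    rw [← (Fin.consEquiv fun _ => ι).summable_iff]
    simpa [Function.comp_def, Fin.prod_univ_succ] using
      (hg 0).mul_norm (ih fun j => hg j.succ)

theorem tsum_fin_pi_prod_of_summable_norm [CompleteSpace R] {n : ℕ} {g : Fin n → ι → R}
    (hg : ∀ j, Summable fun y => ‖g j y‖) :
    ∑' x : Fin n → ι, ∏ j, g j (x j) = ∏ j, ∑' y, g j y := by
  induction n with
  | zero => simp
  | succ n ih =>
    rw [← (Fin.consEquiv fun _ => ι).tsum_eq, Fin.prod_univ_succ, ← ih fun j => hg j.succ,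
      tsum_mul_tsum_of_summable_norm (hg 0) (summable_norm_fin_pi_prod fun j => hg j.succ)]
    simp [Fin.prod_univ_succ]

theorem tsum_fin_pi_prod_ite_eq_mul_pow [CompleteSpace R] {n : ℕ} {l w : ι → R}
    (hl : Summable fun y => ‖l y‖) (hw : Summable fun y => ‖w y‖) (i : Fin n) :
    ∑' x : Fin n → ι, ∏ j, (if j = i then l (x j) else w (x j))
      = (∑' y, l y) * (∑' y, w y) ^ (n - 1) := by
  have hnorm (j : Fin n) : Summable fun y => ‖if j = i then l y else w y‖ := by
    split_ifs
    exacts [hl, hw]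
  have htsum (j : Fin n) :
      ∑' y, (if j = i then l y else w y) = if j = i then ∑' y, l y else ∑' y, w y := by
    split_ifs <;> rfl
  rw [tsum_fin_pi_prod_of_summable_norm hnorm]
  simp [htsum, prod_ite, filter_eq', filter_ne']

end FinPiProd

/-- If some `p j` vanishes both sides are `0`; otherwise this is `log_prod`. -/
theorem prod_mul_prod_mul_log_prod {ι : Type*} [Fintype ι] [DecidableEq ι] (φ p : ι → ℝ) :
    (∏ j, φ j) * (∏ j, p j) * log (∏ j, p j)
      = ∑ i, ∏ j, (if j = i then φ j * p j * log (p j) else φ j * p j) := by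
  by_cases hzero : ∃ i, p i = 0
  · obtain ⟨i₀, hi₀⟩ := hzero
    rw [prod_eq_zero (mem_univ i₀) hi₀, mul_zero, zero_mul]
    refine (sum_eq_zero fun i _ => prod_eq_zero (mem_univ i₀) ?_).symm
    split_ifs <;> simp [hi₀]
  · push Not at hzero
    rw [← prod_mul_distrib, log_prod fun i _ => hzero i, mul_sum]
    refine sum_congr rfl fun i _ => ?_
    have hsplit : ∀ j, (if j = i then φ j * p j * log (p j) else φ j * p j)
        = φ j * p j * (if i = j then log (p j) else 1) := by
      intro j
      rcases eq_or_ne j i with rfl | hji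
      · simp
      · simp [hji, hji.symm]
    simp_rw [hsplit, prod_mul_distrib, prod_ite_eq, if_pos (mem_univ i)]

theorem weighted_entropy_iid_multiplicative_general {X : Type*}
    (p : X → ℝ) (φ : X → ℝ) (n : ℕ)
    (hE : Summable (fun x => φ x * p x))
    (hW : Summable (fun x => φ x * p x * Real.log (p x))) :
    -∑' x : Fin n → X,
        (∏ j, φ (x j)) * (∏ i, p (x i)) * Real.log (∏ i, p (x i))
      = (n : ℝ) * (-∑' x, φ x * p x * Real.log (p x)) * (∑' x, φ x * p x) ^ (n - 1) := by
  set l : X → ℝ := fun y => φ y * p y * log (p y)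
  set w : X → ℝ := fun y => φ y * p y
  have hterm (i : Fin n) : ∑' x : Fin n → X, ∏ j, (if j = i then l (x j) else w (x j))
      = (∑' y, l y) * (∑' y, w y) ^ (n - 1) :=
    tsum_fin_pi_prod_ite_eq_mul_pow hW.norm hE.norm i
  have hsummable (i : Fin n) :
      Summable fun x : Fin n → X => ∏ j, (if j = i then l (x j) else w (x j)) :=
    (summable_norm_fin_pi_prod (g := fun j y => if j = i then l y else w y)
      fun j => by split_ifs; exacts [hW.norm, hE.norm]).of_norm
  have hexpand (x : Fin n → X) :
      (∏ j, φ (x j)) * (∏ i, p (x i)) * log (∏ i, p (x i))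
        = ∑ i, ∏ j, (if j = i then l (x j) else w (x j)) :=
    prod_mul_prod_mul_log_prod (fun j => φ (x j)) (fun j => p (x j))
  rw [tsum_congr hexpand, Summable.tsum_finsetSum fun i _ => hsummable i,
    sum_congr rfl fun i _ => hterm i, sum_const, card_univ, Fintype.card_fin, nsmul_eq_mul]
  ring

/-- Weighted entropy of an i.i.d. string with a multiplicative weight function:
`H^w_{φ_n}(f_n) = n · H^w_φ(p) · (E[φ])^{n-1}`. -/
theorem weighted_entropy_iid_multiplicative {X : Type*} [Countable X]
    (p : X → ℝ) (φ : X → ℝ) (n : ℕ)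
    (hp0 : ∀ x, 0 ≤ p x) (hp1 : ∑' x, p x = 1)
    (hφ0 : ∀ x, 0 ≤ φ x)
    (hE : Summable (fun x => φ x * p x))
    (hW : Summable (fun x => φ x * p x * Real.log (p x)))
    (hsum : Summable (fun x : Fin n → X =>
      (∏ j, φ (x j)) * (∏ i, p (x i)) * Real.log (∏ i, p (x i)))) :
    -∑' x : Fin n → X,
        (∏ j, φ (x j)) * (∏ i, p (x i)) * Real.log (∏ i, p (x i))
      = (n : ℝ) * (-∑' x, φ x * p x * Real.log (p x)) * (∑' x, φ x * p x) ^ (n - 1) :=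
  weighted_entropy_iid_multiplicative_general p φ n hE hW
end

section
/- Let W(x,y) = p(x) · 1{|x−y| > a} on ℝ×ℝ, where p(x) = (2π)^{-1/2} e^{-x²/2} and a > 0. Then the second iterate kernel W^{(2)}(x,y) = ∫_ℝ W(x,u) W(u,y) du satisfies W^{(2)}(x,y) ≥ c·p(x) for all x, y ∈ ℝ, where c = ∫_ℝ 1{|u| > 2a} p(u) du > 0. -/
/-!
The product `1{|x-u| > a} 1{|u-y| > a}` is the indicator of the complement of
`B(x,a) ∪ B(y,a)`, a set of Lebesgue measure at most `4a`, so `W⁽²⁾(x,y)` is `p(x)` times the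
Gaussian mass outside a set of measure at most `4a`. Since `p` is radially decreasing, the bathtub
principle says that among such sets the centred interval `[-2a, 2a]` carries the most mass, so
the mass outside is at least `c`.
-/

open MeasureTheory Real Set Metric ProbabilityTheory

section Bathtub

variable {α : Type*} [MeasurableSpace α] {μ : Measure α} {f : α → ℝ} {s t : Set α} {c : ℝ}

theorem setIntegral_le_setIntegral_of_measure_le (hf : Integrable f μ) (hs : MeasurableSet s)
    (ht : MeasurableSet t) (hμt : μ t ≠ ⊤) (hμ : μ s ≤ μ t) (hc : 0 ≤ c)
    (hf_mem : ∀ x ∈ t, c ≤ f x) (hf_notMem : ∀ x ∉ t, f x ≤ c) :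
    ∫ x in s, f x ∂μ ≤ ∫ x in t, f x ∂μ := by
  have hμts : μ (t \ s) ≠ ⊤ := measure_ne_top_of_subset sdiff_subset hμt
  have hμst : μ (s \ t) ≤ μ (t \ s) := by
    have hμst_inter : μ (s ∩ t) ≠ ⊤ := measure_ne_top_of_subset inter_subset_right hμt
    rwa [← ENNReal.add_le_add_iff_left hμst_inter, measure_inter_add_sdiff s ht, inter_comm,
      measure_inter_add_sdiff t hs]
  have h_diff : ∫ x in s \ t, f x ∂μ ≤ ∫ x in t \ s, f x ∂μ :=
    calc ∫ x in s \ t, f x ∂μ ≤ ∫ _ in s \ t, c ∂μ :=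
          setIntegral_mono_on hf.integrableOn
            (integrableOn_const (ne_top_of_le_ne_top hμts hμst)) (hs.diff ht)
            fun x hx => hf_notMem x hx.2
      _ = c * μ.real (s \ t) := by rw [setIntegral_const, smul_eq_mul, mul_comm]
      _ ≤ c * μ.real (t \ s) := mul_le_mul_of_nonneg_left (ENNReal.toReal_mono hμts hμst) hc
      _ ≤ ∫ x in t \ s, f x ∂μ :=
          setIntegral_ge_of_const_le_real (ht.diff hs) hμts (fun x hx => hf_mem x hx.1)
            hf.integrableOn
  calc ∫ x in s, f x ∂μ = ∫ x in s ∩ t, f x ∂μ + ∫ x in s \ t, f x ∂μ :=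
        (integral_inter_add_sdiff ht hf.integrableOn).symm
    _ ≤ ∫ x in t ∩ s, f x ∂μ + ∫ x in t \ s, f x ∂μ := by
        rw [inter_comm]
        exact add_le_add_right h_diff _
    _ = ∫ x in t, f x ∂μ := integral_inter_add_sdiff hs hf.integrableOn

theorem setIntegral_compl_le_setIntegral_compl_of_measure_le (hf : Integrable f μ)
    (hs : MeasurableSet s) (ht : MeasurableSet t) (hμt : μ t ≠ ⊤) (hμ : μ s ≤ μ t) (hc : 0 ≤ c)
    (hf_mem : ∀ x ∈ t, c ≤ f x) (hf_notMem : ∀ x ∉ t, f x ≤ c) :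
    ∫ x in tᶜ, f x ∂μ ≤ ∫ x in sᶜ, f x ∂μ := by
  have h_le := setIntegral_le_setIntegral_of_measure_le hf hs ht hμt hμ hc hf_mem hf_notMem
  have hs' := integral_add_compl hs hf
  have ht' := integral_add_compl ht hf
  linarith

end Bathtub

lemma gaussianPDFReal_zero_one_apply (x : ℝ) :
    gaussianPDFReal 0 1 x = Real.exp (-x ^ 2 / 2) / Real.sqrt (2 * π) := by
  simp [gaussianPDFReal, div_eq_inv_mul]

lemma gaussianPDFReal_zero_le_of_abs_le (v : NNReal) {x y : ℝ} (h : |x| ≤ |y|) :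
    gaussianPDFReal 0 v y ≤ gaussianPDFReal 0 v x := by
  simp only [gaussianPDFReal, sub_zero]
  refine mul_le_mul_of_nonneg_left (exp_le_exp.2 ?_) (by positivity)
  exact div_le_div_of_nonneg_right (neg_le_neg (sq_le_sq.2 h)) (by positivity)

lemma volume_union_closedBall_le (x y r : ℝ) :
    volume (closedBall x r ∪ closedBall y r) ≤ volume (closedBall (0 : ℝ) (2 * r)) := by
  rcases le_or_gt 0 r with hr | hr
  · calc volume (closedBall x r ∪ closedBall y r)
          ≤ volume (closedBall x r) + volume (closedBall y r) := measure_union_le _ _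
      _ = volume (closedBall (0 : ℝ) (2 * r)) := by
          rw [Real.volume_closedBall, Real.volume_closedBall, Real.volume_closedBall,
            ← ENNReal.ofReal_add (by positivity) (by positivity)]
          ring_nf
  · simp [closedBall_eq_empty.2 hr]

lemma setIntegral_compl_closedBall_gaussianPDFReal_le (v : NNReal) (r : ℝ) {s : Set ℝ}
    (hs : MeasurableSet s) (hvol : volume s ≤ volume (closedBall (0 : ℝ) r)) :
    ∫ x in (closedBall 0 r)ᶜ, gaussianPDFReal 0 v x ≤ ∫ x in sᶜ, gaussianPDFReal 0 v x := by
  -- `max r 0` rather than `r` spares a separate case `r < 0`, where the ball is empty.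
  have hr : |max r 0| = max r 0 := abs_of_nonneg (le_max_right r 0)
  refine setIntegral_compl_le_setIntegral_compl_of_measure_le (c := gaussianPDFReal 0 v (max r 0))
    (integrable_gaussianPDFReal 0 v) hs measurableSet_closedBall measure_closedBall_lt_top.ne hvol
    (gaussianPDFReal_nonneg _ _ _) (fun x hx => ?_) (fun x hx => ?_)
  · refine gaussianPDFReal_zero_le_of_abs_le v ?_
    rw [mem_closedBall_zero_iff, Real.norm_eq_abs] at hx
    rw [hr]
    exact hx.trans (le_max_left r 0)
  · refine gaussianPDFReal_zero_le_of_abs_le v ?_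
    rw [mem_closedBall_zero_iff, Real.norm_eq_abs, not_le] at hx
    rw [hr]
    exact max_le hx.le (abs_nonneg x)

lemma setIntegral_gaussianPDFReal_pos (m : ℝ) {v : NNReal} (hv : v ≠ 0) {s : Set ℝ}
    (hs : 0 < volume s) : 0 < ∫ x in s, gaussianPDFReal m v x := by
  rw [setIntegral_pos_iff_support_of_nonneg_ae (ae_of_all _ (gaussianPDFReal_nonneg m v))
    (integrable_gaussianPDFReal m v).integrableOn]
  simpa [Function.support, fun x => (gaussianPDFReal_pos m v x hv).ne'] using hs

lemma volume_compl_closedBall_pos (x r : ℝ) : 0 < volume (closedBall x r)ᶜ :=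
  isClosed_closedBall.isOpen_compl.measure_pos volume
    (nonempty_compl.2 (isCompact_closedBall x r).ne_univ)

theorem gaussian_kernel_second_iterate_lower_bound_general (a : ℝ) :
    (0 < ∫ u : ℝ, if 2 * a < |u| then Real.exp (-u ^ 2 / 2) / Real.sqrt (2 * π) else 0)
    ∧ ∀ x y : ℝ,
      (∫ u : ℝ, if 2 * a < |u| then Real.exp (-u ^ 2 / 2) / Real.sqrt (2 * π) else 0) *
          (Real.exp (-x ^ 2 / 2) / Real.sqrt (2 * π))
        ≤ ∫ u : ℝ,
            ((Real.exp (-x ^ 2 / 2) / Real.sqrt (2 * π)) * (if a < |x - u| then 1 else 0)) *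
            ((Real.exp (-u ^ 2 / 2) / Real.sqrt (2 * π)) * (if a < |u - y| then 1 else 0)) := by
  classical
  simp only [← gaussianPDFReal_zero_one_apply]
  set p := gaussianPDFReal 0 1
  have hc : (∫ u, if 2 * a < |u| then p u else 0) = ∫ u in (closedBall 0 (2 * a))ᶜ, p u := by
    rw [← integral_indicator measurableSet_closedBall.compl]
    congr with u
    simp [indicator_apply]
  rw [hc]
  refine ⟨setIntegral_gaussianPDFReal_pos 0 one_ne_zero (volume_compl_closedBall_pos 0 _),
    fun x y => ?_⟩
  have hB : MeasurableSet (closedBall x a ∪ closedBall y a) :=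
    measurableSet_closedBall.union measurableSet_closedBall
  have hW : (∫ u, (p x * if a < |x - u| then 1 else 0) * (p u * if a < |u - y| then 1 else 0))
      = p x * ∫ u in (closedBall x a ∪ closedBall y a)ᶜ, p u := by
    rw [← integral_indicator hB.compl, ← integral_const_mul]
    congr with u
    simp only [indicator_apply, mem_compl_iff, mem_union, mem_closedBall, Real.dist_eq, not_or,
      not_le, abs_sub_comm u x]
    split_ifs <;> simp_all
  rw [hW, mul_comm]
  exact mul_le_mul_of_nonneg_left (setIntegral_compl_closedBall_gaussianPDFReal_le 1 (2 * a) hB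
    (volume_union_closedBall_le x y a)) (gaussianPDFReal_nonneg 0 1 x)

/-- For the kernel `W(x,y) = p(x)·1{|x−y| > a}` with `p` the standard Gaussian
density, the second iterate satisfies `W^{(2)}(x,y) ≥ c·p(x)` for all `x, y`, where
`c = ∫ 1{|u| > 2a} p(u) du > 0`. -/
theorem gaussian_kernel_second_iterate_lower_bound (a : ℝ) (ha : 0 < a) :
    (0 < ∫ u : ℝ, if 2 * a < |u| then Real.exp (-u ^ 2 / 2) / Real.sqrt (2 * π) else 0)
    ∧ ∀ x y : ℝ,
      (∫ u : ℝ, if 2 * a < |u| then Real.exp (-u ^ 2 / 2) / Real.sqrt (2 * π) else 0) *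
          (Real.exp (-x ^ 2 / 2) / Real.sqrt (2 * π))
        ≤ ∫ u : ℝ,
            ((Real.exp (-x ^ 2 / 2) / Real.sqrt (2 * π)) * (if a < |x - u| then 1 else 0)) *
            ((Real.exp (-u ^ 2 / 2) / Real.sqrt (2 * π)) * (if a < |u - y| then 1 else 0)) :=
  gaussian_kernel_second_iterate_lower_bound_general a
end
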